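/- Let θ be a 2×2 real matrix, D* : ℝ² → ℝ² a linear map with D* ∘ θ = θ ∘ D*, and ξ ∈ ℝ². For s ∈ ℝ set F_s := ∫₀ˢ exp(uD*) du and define φ_s : G_θ → G_θ by φ_s(t,v) = (t, exp(sD*)v + F_s Λ_t ξ). Then φ_0 is the identity map, each φ_s is a group automorphism of G_θ, and φ_{s₁+s₂} = φ_{s₁} ∘ φ_{s₂} for all s₁, s₂ ∈ ℝ; i.e., s ↦ φ_s is a one-parameter group of automorphisms of G_θ. -/

import Mathlib

open Matrix intervalIntegral

noncomputable section

attribute [local instance] Matrix.linftyOpNormedAddCommGroup Matrix.linftyOpNormedSpace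

/-- The matrix exponential of a `2 × 2` real matrix. -/
def expm (A : Matrix (Fin 2) (Fin 2) ℝ) : Matrix (Fin 2) (Fin 2) ℝ := NormedSpace.exp A

/-- `Λ_s = ∫₀ˢ exp(uθ) du`. -/
def Lam (θ : Matrix (Fin 2) (Fin 2) ℝ) (s : ℝ) : Matrix (Fin 2) (Fin 2) ℝ :=
  ∫ u in (0:ℝ)..s, expm (u • θ)

/-- Multiplication of the group `G_θ = ℝ ×_ρ ℝ²`. -/
def gmul (θ : Matrix (Fin 2) (Fin 2) ℝ) (p q : ℝ × (Fin 2 → ℝ)) : ℝ × (Fin 2 → ℝ) :=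
  (p.1 + q.1, p.2 + (expm (p.1 • θ)).mulVec q.2)

/-- The flow `φ_s(t,v) = (t, exp(sD*)v + F_sΛ_tξ)` of the linear vector field
`X(t,v) = (0, D*v + Λ_tξ)`, where `F_s = ∫₀ˢ exp(uD*) du`. -/
def flow (θ Dstar : Matrix (Fin 2) (Fin 2) ℝ) (ξ : Fin 2 → ℝ) (s : ℝ)
    (p : ℝ × (Fin 2 → ℝ)) : ℝ × (Fin 2 → ℝ) :=
  (p.1, (expm (s • Dstar)).mulVec p.2 + ((Lam Dstar s) * (Lam θ p.1)).mulVec ξ)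

/-! Everything follows from two additivity laws in the time parameter, `exp((a+b)A) = exp(aA) exp(bA)`
and the cocycle identity `Λ_{a+b} = Λ_a + exp(aA) Λ_b`, together with the fact that `D* θ = θ D*`
makes `exp(sD*)` and `F_s` commute with every `exp(tθ)`. The inverse of `φ_s` is `φ_{-s}`. -/

attribute [local instance] Matrix.linftyOpNormedRing Matrix.linftyOpNormedAlgebra

instance : ENormedAddMonoid (Matrix (Fin 2) (Fin 2) ℝ) :=
  NormedAddCommGroup.toENormedAddCommMonoid.toENormedAddMonoid

variable {A B C θ D : Matrix (Fin 2) (Fin 2) ℝ} {ξ : Fin 2 → ℝ}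

lemma continuous_expm_smul (A : Matrix (Fin 2) (Fin 2) ℝ) :
    Continuous fun u : ℝ => expm (u • A) :=
  NormedSpace.exp_continuous.comp (continuous_id.smul continuous_const)

lemma expm_zero : expm 0 = 1 :=
  NormedSpace.exp_zero

lemma expm_add_smul (A : Matrix (Fin 2) (Fin 2) ℝ) (a b : ℝ) :
    expm ((a + b) • A) = expm (a • A) * expm (b • A) := by
  unfold expm
  rw [add_smul]
  exact NormedSpace.exp_add_of_commute (((Commute.refl A).smul_left a).smul_right b)

lemma Commute.expm_smul (h : Commute A B) (a b : ℝ) : Commute (expm (a • A)) (expm (b • B)) :=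
  ((h.smul_left a).smul_right b).exp

lemma Lam_zero : Lam A 0 = 0 :=
  integral_same

lemma Lam_add (A : Matrix (Fin 2) (Fin 2) ℝ) (a b : ℝ) :
    Lam A (a + b) = Lam A a + expm (a • A) * Lam A b := by
  have hi : ∀ x y : ℝ, IntervalIntegrable (fun u : ℝ => expm (u • A)) MeasureTheory.volume x y :=
    (continuous_expm_smul A).intervalIntegrable
  have h_shift : ∫ u in a..(a + b), expm (u • A) = expm (a • A) * Lam A b := by
    have h := integral_comp_add_left (fun u => expm (u • A)) a (a := 0) (b := b)
    rw [add_zero] at h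
    simp only [← h, expm_add_smul]
    exact (ContinuousLinearMap.mul ℝ _ (expm (a • A))).intervalIntegral_comp_comm (hi 0 b)
  rw [Lam, ← integral_add_adjacent_intervals (hi 0 a) (hi a (a + b)), h_shift]
  rfl

lemma Commute.Lam_left (h : ∀ u : ℝ, Commute (expm (u • A)) C) (s : ℝ) :
    Commute (Lam A s) C := by
  have hi : IntervalIntegrable (fun u : ℝ => expm (u • A)) MeasureTheory.volume 0 s :=
    (continuous_expm_smul A).intervalIntegrable 0 s
  have h_right : ∫ u in (0:ℝ)..s, expm (u • A) * C = Lam A s * C :=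
    ((ContinuousLinearMap.mul ℝ _).flip C).intervalIntegral_comp_comm hi
  have h_left : ∫ u in (0:ℝ)..s, C * expm (u • A) = C * Lam A s :=
    (ContinuousLinearMap.mul ℝ _ C).intervalIntegral_comp_comm hi
  rw [Commute, SemiconjBy, ← h_right, ← h_left]
  exact integral_congr fun u _ => h u

lemma flow_zero : flow θ D ξ 0 = id := by
  funext p
  simp [flow, expm_zero, Lam_zero]

lemma flow_add (s₁ s₂ : ℝ) : flow θ D ξ (s₁ + s₂) = flow θ D ξ s₁ ∘ flow θ D ξ s₂ := by
  funext p
  refine Prod.ext rfl ?_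
  simp only [flow, Function.comp_apply, expm_add_smul, Lam_add, mulVec_add, add_mulVec,
    mulVec_mulVec, add_mul, mul_assoc]
  abel

lemma flow_bijective (s : ℝ) : Function.Bijective (flow θ D ξ s) := by
  have h_inv : ∀ a b : ℝ, a + b = 0 → Function.LeftInverse (flow θ D ξ a) (flow θ D ξ b) :=
    fun a b hab p => by
      rw [← Function.comp_apply (f := flow θ D ξ a), ← flow_add, hab, flow_zero, id]
  exact Function.bijective_iff_has_inverse.mpr
    ⟨flow θ D ξ (-s), h_inv _ _ (neg_add_cancel s), h_inv _ _ (add_neg_cancel s)⟩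

lemma flow_gmul (h : Commute D θ) (s : ℝ) (p q : ℝ × (Fin 2 → ℝ)) :
    flow θ D ξ s (gmul θ p q) = gmul θ (flow θ D ξ s p) (flow θ D ξ s q) := by
  have h_Lam :
      Lam D s * (expm (p.1 • θ) * Lam θ q.1) = expm (p.1 • θ) * (Lam D s * Lam θ q.1) := by
    rw [← mul_assoc, (Commute.Lam_left (fun u => h.expm_smul u p.1) s).eq, mul_assoc]
  refine Prod.ext rfl ?_
  simp only [flow, gmul, Lam_add, mulVec_add, mul_add, add_mulVec, mulVec_mulVec, h_Lam,
    (h.expm_smul s p.1).eq]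
  abel

/-- Let `D*` commute with `θ` and `ξ ∈ ℝ²`.  With `F_s = ∫₀ˢ exp(uD*) du`
(which is `Lam Dstar s`), the maps `φ_s(t,v) = (t, exp(sD*)v + F_sΛ_tξ)` form a one-parameter
group of automorphisms of `G_θ`: `φ_0 = id`, each `φ_s` is a (bijective) group homomorphism,
and `φ_{s₁+s₂} = φ_{s₁} ∘ φ_{s₂}`. -/
theorem flow_one_parameter_automorphisms (θ Dstar : Matrix (Fin 2) (Fin 2) ℝ)
    (hcomm : Dstar * θ = θ * Dstar) (ξ : Fin 2 → ℝ) :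
    flow θ Dstar ξ 0 = id ∧
    (∀ s : ℝ,
      (∀ p q : ℝ × (Fin 2 → ℝ),
        flow θ Dstar ξ s (gmul θ p q) = gmul θ (flow θ Dstar ξ s p) (flow θ Dstar ξ s q)) ∧
      Function.Bijective (flow θ Dstar ξ s)) ∧
    (∀ s₁ s₂ : ℝ, flow θ Dstar ξ (s₁ + s₂) = flow θ Dstar ξ s₁ ∘ flow θ Dstar ξ s₂) :=
  ⟨flow_zero, fun s => ⟨flow_gmul hcomm s, flow_bijective s⟩, flow_add⟩
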